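/- arXiv:2103.01672 — 3 statements merged into one kernel-verified Lean document; each statement's English description precedes it below -/
import Mathlib

section
/- Let V̂ : ℝ³ → ℝ be continuous, nonnegative, integrable, with V̂ ∈ L², V̂(0) > 0, and V̂(p) = V̂(−p). Let μ > 0. Then for every (γ, α, ρ₀) in the domain D (γ ∈ L¹((1+p²)dp), γ ≥ 0, α² ≤ γ² + γ, ρ₀ ≥ 0), there are constants ε > 0, C (independent of the state) such that F(γ, α, ρ₀) ≥ ∫ p² γ(p) dp + ε(ρ₀² + ρ_γ²) − C, where ρ_γ = ∫γ. -/
/-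
The only terms of the functional that can be negative are `ρ₀ ∫ V̂ (γ + α)` and the pairing
term. From `α² ≤ γ² + γ` one gets `γ + α ≥ -1/2` and `|α| ≤ γ + √γ`, hence the first is at least
`-ρ₀ ‖V̂‖₁ / 2`, and `-(γ p γ q + α p α q) ≤ γ p (√(γ q) + 1) + γ q (√(γ p) + 1)`. Cauchy–Schwarz
in `q` against the translate `V̂ (p - ·) ∈ L²` then bounds the pairing term below by
`-2 (‖V̂‖₂ √ρ_γ + ‖V̂‖₁) ρ_γ`. Both losses are of lower order than `ρ₀² + ρ_γ²`, so the term
`(V̂ 0 / 2) (ρ₀ + ρ_γ)² ≥ (V̂ 0 / 2) (ρ₀² + ρ_γ²)` absorbs them with `ε = V̂ 0 / 4`.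

Every lower bound is proved through the lower Lebesgue integral of the negative part, so it also
holds when a Bochner integral in the functional is undefined (and hence `0`).
-/

open MeasureTheory

abbrev E3 := EuclideanSpace ℝ (Fin 3)

/-- The Bogoliubov energy functional. -/
noncomputable def bogF (Vhat : E3 → ℝ) (μ : ℝ) (γ α : E3 → ℝ) (ρ₀ : ℝ) : ℝ :=
  (∫ p, ‖p‖ ^ 2 * γ p) - μ * (ρ₀ + ∫ p, γ p) + Vhat 0 / 2 * (ρ₀ + ∫ p, γ p) ^ 2 +
    ρ₀ * (∫ p, Vhat p * (γ p + α p)) +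
    1 / 2 * ∫ p, ∫ q, Vhat (p - q) * (γ p * γ q + α p * α q)

open scoped ENNReal

theorem abs_le_add_sqrt_of_sq_le {g a : ℝ} (hg : 0 ≤ g) (h : a ^ 2 ≤ g ^ 2 + g) :
    |a| ≤ g + √g := by
  refine abs_le_of_sq_le_sq (h.trans ?_) (by positivity)
  nlinarith [Real.sq_sqrt hg, Real.sqrt_nonneg g]

theorem neg_half_le_add_of_sq_le {g a : ℝ} (hg : 0 ≤ g) (h : a ^ 2 ≤ g ^ 2 + g) :
    -(1 / 2) ≤ g + a := by
  nlinarith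

theorem neg_mul_add_mul_le_of_sq_le {g g' a a' : ℝ} (hg : 0 ≤ g) (hg' : 0 ≤ g')
    (h : a ^ 2 ≤ g ^ 2 + g) (h' : a' ^ 2 ≤ g' ^ 2 + g') :
    -(g * g' + a * a') ≤ g * (√g' + 1) + g' * (√g + 1) := by
  have hprod : |a * a'| ≤ (g + √g) * (g' + √g') := by
    rw [abs_mul]
    exact mul_le_mul (abs_le_add_sqrt_of_sq_le hg h) (abs_le_add_sqrt_of_sq_le hg' h')
      (abs_nonneg _) (by positivity)
  nlinarith [neg_abs_le (a * a'), Real.sq_sqrt hg, Real.sq_sqrt hg', sq_nonneg (√g - √g')]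

theorem mul_le_div_four_mul_sq_add_sq_div {c : ℝ} (hc : 0 < c) (b x : ℝ) :
    b * x ≤ c / 4 * x ^ 2 + b ^ 2 / c := by
  have : b ^ 2 / c * c = b ^ 2 := div_mul_cancel₀ _ hc.ne'
  nlinarith [sq_nonneg (c * x - 2 * b)]

section RealIntegral

variable {X : Type*} [MeasurableSpace X] {μ : Measure X}

theorem ofReal_integral_le_lintegral_ofReal (f : X → ℝ) :
    ENNReal.ofReal (∫ x, f x ∂μ) ≤ ∫⁻ x, ENNReal.ofReal (f x) ∂μ := by
  by_cases hf : Integrable f μ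
  · rw [integral_eq_lintegral_pos_part_sub_lintegral_neg_part hf]
    exact (ENNReal.ofReal_le_ofReal (sub_le_self _ ENNReal.toReal_nonneg)).trans
      ENNReal.ofReal_toReal_le
  · simp [integral_undef hf]

theorem neg_le_integral_of_lintegral_ofReal_neg_le {f : X → ℝ} {c : ℝ} (hc : 0 ≤ c)
    (h : ∫⁻ x, ENNReal.ofReal (-f x) ∂μ ≤ ENNReal.ofReal c) : -c ≤ ∫ x, f x ∂μ := by
  have := (ofReal_integral_le_lintegral_ofReal (μ := μ) (fun x => -f x)).trans h
  rw [integral_neg, ENNReal.ofReal_le_ofReal_iff hc] at this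
  linarith

theorem neg_le_integral_integral_of_lintegral_lintegral_ofReal_neg_le {β : Type*}
    [MeasurableSpace β] {ν : Measure β} {f : X → β → ℝ} {c : ℝ} (hc : 0 ≤ c)
    (h : ∫⁻ x, ∫⁻ y, ENNReal.ofReal (-f x y) ∂ν ∂μ ≤ ENNReal.ofReal c) :
    -c ≤ ∫ x, ∫ y, f x y ∂ν ∂μ := by
  refine neg_le_integral_of_lintegral_ofReal_neg_le hc (le_trans (lintegral_mono fun x => ?_) h)
  simpa only [integral_neg] using ofReal_integral_le_lintegral_ofReal (μ := ν) (fun y => -f x y)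

theorem lintegral_lintegral_add_swap [SFinite μ] {Φ Ψ : X → X → ℝ≥0∞}
    (hΦ : AEMeasurable (Function.uncurry Φ) (μ.prod μ))
    (hΨ : AEMeasurable (Function.uncurry Ψ) (μ.prod μ)) :
    ∫⁻ p, ∫⁻ q, (Φ p q + Ψ q p) ∂μ ∂μ = ∫⁻ p, ∫⁻ q, Φ p q ∂μ ∂μ + ∫⁻ p, ∫⁻ q, Ψ p q ∂μ ∂μ := by
  have hΨ' : AEMeasurable (fun z : X × X => Ψ z.2 z.1) (μ.prod μ) :=
    hΨ.comp_quasiMeasurePreserving (Measure.measurePreserving_swap).quasiMeasurePreserving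
  calc ∫⁻ p, ∫⁻ q, (Φ p q + Ψ q p) ∂μ ∂μ
      = ∫⁻ z, Φ z.1 z.2 + Ψ z.2 z.1 ∂μ.prod μ := (lintegral_prod _ (hΦ.add hΨ')).symm
    _ = ∫⁻ z, Φ z.1 z.2 ∂μ.prod μ + ∫⁻ z, Ψ z.2 z.1 ∂μ.prod μ := lintegral_add_left' hΦ _
    _ = ∫⁻ z, Φ z.1 z.2 ∂μ.prod μ + ∫⁻ z, Ψ z.1 z.2 ∂μ.prod μ := by
      congr 1
      exact lintegral_prod_swap (fun z => Ψ z.1 z.2)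
    _ = _ := by
      congr 1
      · exact lintegral_prod (fun z => Φ z.1 z.2) hΦ
      · exact lintegral_prod (fun z => Ψ z.1 z.2) hΨ

end RealIntegral

section Convolution

variable {G : Type*} [MeasurableSpace G] [AddGroup G] [MeasurableAdd₂ G] [MeasurableNeg G]
  {μ : Measure G} [μ.IsAddLeftInvariant] [μ.IsNegInvariant]

theorem lintegral_sub_mul_le (K g : G → ℝ≥0∞) (hK : Measurable K) (hg : AEMeasurable g μ)
    (p : G) :
    ∫⁻ q, K (p - q) * g q ∂μ ≤
      (∫⁻ x, K x ^ 2 ∂μ) ^ (1 / 2 : ℝ) * (∫⁻ x, g x ^ 2 ∂μ) ^ (1 / 2 : ℝ) := by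
  have hKp : AEMeasurable (fun q => K (p - q)) μ :=
    (hK.comp (measurable_const.sub measurable_id)).aemeasurable
  have := ENNReal.lintegral_mul_le_Lp_mul_Lq μ Real.HolderConjugate.two_two hKp hg
  simp only [ENNReal.rpow_two, Pi.mul_apply] at this
  rwa [lintegral_sub_left_eq_self (fun x => K x ^ 2)] at this

theorem lintegral_lintegral_sub_mul_le (K f g : G → ℝ≥0∞) (hK : Measurable K)
    (hf : AEMeasurable f μ) (hg : AEMeasurable g μ) :
    ∫⁻ p, ∫⁻ q, K (p - q) * (f p * (g q + 1)) ∂μ ∂μ ≤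
      ((∫⁻ x, K x ^ 2 ∂μ) ^ (1 / 2 : ℝ) * (∫⁻ x, g x ^ 2 ∂μ) ^ (1 / 2 : ℝ) + ∫⁻ x, K x ∂μ) *
        ∫⁻ x, f x ∂μ := by
  set C := (∫⁻ x, K x ^ 2 ∂μ) ^ (1 / 2 : ℝ) * (∫⁻ x, g x ^ 2 ∂μ) ^ (1 / 2 : ℝ) + ∫⁻ x, K x ∂μ
  have hinner (p : G) : ∫⁻ q, K (p - q) * (f p * (g q + 1)) ∂μ ≤ f p * C := by
    have hKp : Measurable fun q => K (p - q) := hK.comp (measurable_const.sub measurable_id)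
    calc ∫⁻ q, K (p - q) * (f p * (g q + 1)) ∂μ
        = ∫⁻ q, f p * (K (p - q) * g q + K (p - q)) ∂μ := by
          congr 1 with q
          ring
      _ = f p * ∫⁻ q, K (p - q) * g q + K (p - q) ∂μ :=
          lintegral_const_mul'' _ ((hKp.aemeasurable.mul hg).add hKp.aemeasurable)
      _ = f p * (∫⁻ q, K (p - q) * g q ∂μ + ∫⁻ x, K x ∂μ) := by
          rw [lintegral_add_right' _ hKp.aemeasurable, lintegral_sub_left_eq_self K p]
      _ ≤ f p * C := by
          grw [lintegral_sub_mul_le K g hK hg p]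
  calc ∫⁻ p, ∫⁻ q, K (p - q) * (f p * (g q + 1)) ∂μ ∂μ ≤ ∫⁻ p, f p * C ∂μ := lintegral_mono hinner
    _ = C * ∫⁻ x, f x ∂μ := by rw [lintegral_mul_const'' _ hf, mul_comm]

theorem lintegral_lintegral_sub_mul_add_swap_le [SFinite μ] (K f g : G → ℝ≥0∞) (hK : Measurable K)
    (hf : AEMeasurable f μ) (hg : AEMeasurable g μ) :
    ∫⁻ p, ∫⁻ q, K (p - q) * (f p * (g q + 1) + f q * (g p + 1)) ∂μ ∂μ ≤
      2 * ((∫⁻ x, K x ^ 2 ∂μ) ^ (1 / 2 : ℝ) * (∫⁻ x, g x ^ 2 ∂μ) ^ (1 / 2 : ℝ) + ∫⁻ x, K x ∂μ) *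
        ∫⁻ x, f x ∂μ := by
  -- the second summand is the first one for `K ∘ neg`, with `p` and `q` exchanged
  set Kn : G → ℝ≥0∞ := fun x => K (-x)
  have hKn : Measurable Kn := hK.comp measurable_neg
  have hΦ {L : G → ℝ≥0∞} (hL : Measurable L) :
      AEMeasurable (Function.uncurry fun p q => L (p - q) * (f p * (g q + 1))) (μ.prod μ) :=
    (hL.comp measurable_sub).aemeasurable.mul (hf.comp_fst.mul (hg.comp_snd.add aemeasurable_const))
  calc ∫⁻ p, ∫⁻ q, K (p - q) * (f p * (g q + 1) + f q * (g p + 1)) ∂μ ∂μ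
      = ∫⁻ p, ∫⁻ q, (K (p - q) * (f p * (g q + 1)) + Kn (q - p) * (f q * (g p + 1))) ∂μ ∂μ := by
        simp only [Kn, neg_sub, mul_add]
    _ = ∫⁻ p, ∫⁻ q, K (p - q) * (f p * (g q + 1)) ∂μ ∂μ +
          ∫⁻ p, ∫⁻ q, Kn (p - q) * (f p * (g q + 1)) ∂μ ∂μ :=
        lintegral_lintegral_add_swap (hΦ hK) (hΦ hKn)
    _ ≤ _ := by
        grw [lintegral_lintegral_sub_mul_le K f g hK hf hg,
          lintegral_lintegral_sub_mul_le Kn f g hKn hf hg]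
        simp only [Kn, lintegral_neg_eq_self (fun x => K x ^ 2), lintegral_neg_eq_self K]
        exact le_of_eq (by ring)

end Convolution

section Energy

variable {X : Type*} [MeasurableSpace X] {μ : Measure X} {V γ α : X → ℝ}

theorem neg_half_integral_le_integral_mul_add (hV : ∀ x, 0 ≤ V x) (hVi : Integrable V μ)
    (hγ : ∀ x, 0 ≤ γ x) (hα : ∀ x, α x ^ 2 ≤ γ x ^ 2 + γ x) :
    -((∫ x, V x ∂μ) / 2) ≤ ∫ x, V x * (γ x + α x) ∂μ := by
  refine neg_le_integral_of_lintegral_ofReal_neg_le (div_nonneg (integral_nonneg hV) zero_le_two) ?_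
  rw [← integral_div, ofReal_integral_eq_lintegral_ofReal (hVi.div_const 2)
    (.of_forall fun x => by positivity [hV x])]
  refine lintegral_mono fun x => ENNReal.ofReal_le_ofReal ?_
  nlinarith [hV x, neg_half_le_add_of_sq_le (hγ x) (hα x)]

end Energy

section Interaction

variable {G : Type*} [MeasurableSpace G] [AddGroup G] [MeasurableAdd₂ G] [MeasurableNeg G]
  {μ : Measure G} [μ.IsAddLeftInvariant] [μ.IsNegInvariant] [SFinite μ] {V γ α : G → ℝ}

theorem neg_le_integral_integral_sub_mul (hVm : Measurable V) (hV : ∀ x, 0 ≤ V x)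
    (hV1 : Integrable V μ) (hV2 : MemLp V 2 μ) (hγi : Integrable γ μ) (hγ : ∀ x, 0 ≤ γ x)
    (hα : ∀ x, α x ^ 2 ≤ γ x ^ 2 + γ x) :
    -(2 * (√(∫ x, V x ^ 2 ∂μ) * √(∫ x, γ x ∂μ) + ∫ x, V x ∂μ) * ∫ x, γ x ∂μ) ≤
      ∫ p, ∫ q, V (p - q) * (γ p * γ q + α p * α q) ∂μ ∂μ := by
  set K : G → ℝ≥0∞ := fun x => ENNReal.ofReal (V x)
  set F : G → ℝ≥0∞ := fun x => ENNReal.ofReal (γ x)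
  set S : G → ℝ≥0∞ := fun x => ENNReal.ofReal √(γ x)
  have hK : ∫⁻ x, K x ∂μ = ENNReal.ofReal (∫ x, V x ∂μ) :=
    (ofReal_integral_eq_lintegral_ofReal hV1 (.of_forall hV)).symm
  have hF : ∫⁻ x, F x ∂μ = ENNReal.ofReal (∫ x, γ x ∂μ) :=
    (ofReal_integral_eq_lintegral_ofReal hγi (.of_forall hγ)).symm
  have hKsq : ∫⁻ x, K x ^ 2 ∂μ = ENNReal.ofReal (∫ x, V x ^ 2 ∂μ) := by
    rw [ofReal_integral_eq_lintegral_ofReal hV2.integrable_sq (.of_forall fun x => sq_nonneg _)]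
    simp only [K, ENNReal.ofReal_pow (hV _)]
  have hSsq : ∫⁻ x, S x ^ 2 ∂μ = ENNReal.ofReal (∫ x, γ x ∂μ) := by
    rw [← hF]
    simp only [S, F, ← ENNReal.ofReal_pow (Real.sqrt_nonneg _), Real.sq_sqrt (hγ _)]
  have hpointwise (p q : G) : ENNReal.ofReal (-(V (p - q) * (γ p * γ q + α p * α q))) ≤
      K (p - q) * (F p * (S q + 1) + F q * (S p + 1)) := by
    calc ENNReal.ofReal (-(V (p - q) * (γ p * γ q + α p * α q)))
        ≤ ENNReal.ofReal (V (p - q) * (γ p * (√(γ q) + 1) + γ q * (√(γ p) + 1))) := by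
          rw [← mul_neg]
          exact ENNReal.ofReal_le_ofReal (mul_le_mul_of_nonneg_left
            (neg_mul_add_mul_le_of_sq_le (hγ p) (hγ q) (hα p) (hα q)) (hV _))
      _ = K (p - q) * (F p * (S q + 1) + F q * (S p + 1)) := by
          have := hγ p
          have := hγ q
          rw [ENNReal.ofReal_mul (hV _), ENNReal.ofReal_add (by positivity) (by positivity),
            ENNReal.ofReal_mul (hγ p), ENNReal.ofReal_mul (hγ q),
            ENNReal.ofReal_add (Real.sqrt_nonneg _) zero_le_one,
            ENNReal.ofReal_add (Real.sqrt_nonneg _) zero_le_one, ENNReal.ofReal_one]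
  have ha : 0 ≤ ∫ x, V x ∂μ := integral_nonneg hV
  have hR : 0 ≤ ∫ x, γ x ∂μ := integral_nonneg hγ
  refine neg_le_integral_integral_of_lintegral_lintegral_ofReal_neg_le (by positivity) ?_
  calc ∫⁻ p, ∫⁻ q, ENNReal.ofReal (-(V (p - q) * (γ p * γ q + α p * α q))) ∂μ ∂μ
      ≤ ∫⁻ p, ∫⁻ q, K (p - q) * (F p * (S q + 1) + F q * (S p + 1)) ∂μ ∂μ :=
        lintegral_mono fun p => lintegral_mono fun q => hpointwise p q
    _ ≤ _ := lintegral_lintegral_sub_mul_add_swap_le K F S hVm.ennreal_ofReal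
        hγi.aemeasurable.ennreal_ofReal hγi.aemeasurable.sqrt.ennreal_ofReal
    _ = _ := by
        rw [hK, hF, hKsq, hSsq, ENNReal.ofReal_rpow_of_nonneg (integral_nonneg fun x => sq_nonneg _)
          one_half_pos.le, ENNReal.ofReal_rpow_of_nonneg hR one_half_pos.le, ← Real.sqrt_eq_rpow,
          ← Real.sqrt_eq_rpow, ← ENNReal.ofReal_mul (Real.sqrt_nonneg _),
          ← ENNReal.ofReal_add (by positivity) ha, ← ENNReal.ofReal_ofNat 2,
          ← ENNReal.ofReal_mul zero_le_two, ← ENNReal.ofReal_mul (by positivity)]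

end Interaction

theorem stmt_6_general (Vhat : E3 → ℝ) (μ : ℝ)
    (hVcont : Continuous Vhat) (hVpos : ∀ p, 0 ≤ Vhat p)
    (hVint : Integrable Vhat (volume : Measure E3))
    (hVL2 : MemLp Vhat 2 (volume : Measure E3))
    (hV0 : 0 < Vhat 0) :
    ∃ ε > (0 : ℝ), ∃ C : ℝ, ∀ γ α : E3 → ℝ, ∀ ρ₀ : ℝ,
      Integrable γ (volume : Measure E3) →
      Integrable (fun p => ‖p‖ ^ 2 * γ p) (volume : Measure E3) →
      (∀ p, 0 ≤ γ p) → (∀ p, (α p) ^ 2 ≤ (γ p) ^ 2 + γ p) → 0 ≤ ρ₀ →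
      bogF Vhat μ γ α ρ₀ ≥
        (∫ p, ‖p‖ ^ 2 * γ p) + ε * (ρ₀ ^ 2 + (∫ p, γ p) ^ 2) - C := by
  set v := Vhat 0
  set a := ∫ p, Vhat p
  set s := √(∫ p, Vhat p ^ 2)
  refine ⟨v / 4, by positivity, (μ + a / 2) ^ 2 / v + (μ + a + s ^ 2 / (v / 2)) ^ 2 / (v / 2), ?_⟩
  intro γ α ρ₀ hγ _ hγ0 hα hρ₀
  set R := ∫ p, γ p
  have hR : 0 ≤ R := integral_nonneg hγ0
  have hlinear := mul_le_mul_of_nonneg_left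
    (neg_half_integral_le_integral_mul_add hVpos hVint hγ0 hα) hρ₀
  have hquartic := neg_le_integral_integral_sub_mul hVcont.measurable hVpos hVint hVL2 hγ hγ0 hα
  have hρ₀bound := mul_le_div_four_mul_sq_add_sq_div hV0 (μ + a / 2) ρ₀
  have hRbound := mul_le_div_four_mul_sq_add_sq_div (half_pos hV0) (μ + a + s ^ 2 / (v / 2)) R
  have hsqrtR := mul_le_mul_of_nonneg_right
    (mul_le_div_four_mul_sq_add_sq_div (half_pos hV0) s √R) hR
  rw [Real.sq_sqrt hR] at hsqrtR
  have hcross : 0 ≤ v * ρ₀ * R := by positivity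
  unfold bogF
  linarith

theorem stmt_6 (Vhat : E3 → ℝ) (μ : ℝ) (hμ : 0 < μ)
    (hVcont : Continuous Vhat) (hVpos : ∀ p, 0 ≤ Vhat p)
    (hVint : Integrable Vhat (volume : Measure E3))
    (hVL2 : MemLp Vhat 2 (volume : Measure E3))
    (hV0 : 0 < Vhat 0) (hVsymm : ∀ p, Vhat p = Vhat (-p)) :
    ∃ ε > (0 : ℝ), ∃ C : ℝ, ∀ γ α : E3 → ℝ, ∀ ρ₀ : ℝ,
      Integrable γ (volume : Measure E3) →
      Integrable (fun p => ‖p‖ ^ 2 * γ p) (volume : Measure E3) →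
      (∀ p, 0 ≤ γ p) → (∀ p, (α p) ^ 2 ≤ (γ p) ^ 2 + γ p) → 0 ≤ ρ₀ →
      bogF Vhat μ γ α ρ₀ ≥
        (∫ p, ‖p‖ ^ 2 * γ p) + ε * (ρ₀ ^ 2 + (∫ p, γ p) ^ 2) - C :=
  stmt_6_general Vhat μ hVcont hVpos hVint hVL2 hV0
end

section
/- Let s ∈ (6/5, 2). If γ : ℝ³ → ℝ satisfies 0 ≤ γ ≤ κ, ∫γ ≤ C and ∫ p²γ(p)dp ≤ C, and α satisfies α² ≤ γ² + γ, then ‖α‖_{L^s(ℝ³)} is bounded by a constant depending only on s, κ, C. -/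
/-!
Pointwise `|α| ≤ γ + √γ`, so it suffices to bound `‖γ‖_s` and `‖√γ‖_s`. Since `0 ≤ γ ≤ κ`,
`‖γ‖_s^s ≤ κ^(s-1) ∫ γ`. For `√γ`, split at the unit ball: inside, `√γ ≤ √κ` on a set of finite
measure; outside, `√γ = (|p| √γ) · |p|⁻¹`, and Hölder with `1/s = 1/2 + 1/r`, `r = 2s/(2-s)`, gives
`‖√γ‖_{L^s(B^c)} ≤ (∫ p² γ)^{1/2} ‖|p|⁻¹‖_{L^r(B^c)}`. The last factor is finite because
`r > 3 ⇔ s > 6/5`.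
-/

open MeasureTheory Metric Set Module
open scoped ENNReal

lemma abs_le_add_sqrt_of_sq_le_sq_add {a g : ℝ} (hg : 0 ≤ g) (h : a ^ 2 ≤ g ^ 2 + g) :
    |a| ≤ g + √g := by
  refine abs_le_of_sq_le_sq (h.trans ?_) (by positivity)
  nlinarith [Real.sq_sqrt hg, Real.sqrt_nonneg g]

section MeasureSpace

variable {Ω : Type*} [MeasurableSpace Ω] {μ : Measure Ω}

lemma lintegral_ofReal_le_of_integral_le {f : Ω → ℝ} {C : ℝ} (hf : Integrable f μ)
    (hf₀ : ∀ x, 0 ≤ f x) (hfC : ∫ x, f x ∂μ ≤ C) :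
    ∫⁻ x, ENNReal.ofReal (f x) ∂μ ≤ ENNReal.ofReal C := by
  rw [← ofReal_integral_eq_lintegral_ofReal hf (.of_forall hf₀)]
  exact ENNReal.ofReal_le_ofReal hfC

lemma eLpNorm_le_rpow_mul_lintegral_of_le {f : Ω → ℝ} {κ s : ℝ} (hs : 1 ≤ s)
    (hf₀ : ∀ x, 0 ≤ f x) (hfκ : ∀ x, f x ≤ κ) :
    eLpNorm f (ENNReal.ofReal s) μ ≤
      (ENNReal.ofReal κ ^ (s - 1) * ∫⁻ x, ENNReal.ofReal (f x) ∂μ) ^ (1 / s) := by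
  have hs₀ : 0 < s := by linarith
  rw [eLpNorm_eq_lintegral_rpow_enorm_toReal (by simpa using hs₀) ENNReal.ofReal_ne_top,
    ENNReal.toReal_ofReal hs₀.le, ← lintegral_const_mul' _ _ (by finiteness)]
  refine ENNReal.rpow_le_rpow (lintegral_mono fun x => ?_) (by positivity)
  calc ‖f x‖ₑ ^ s = ENNReal.ofReal (f x) ^ (s - 1) * ENNReal.ofReal (f x) ^ (1 : ℝ) := by
        rw [Real.enorm_eq_ofReal (hf₀ x),
          ← ENNReal.rpow_add_of_nonneg _ _ (by linarith) zero_le_one, sub_add_cancel]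
    _ ≤ ENNReal.ofReal κ ^ (s - 1) * ENNReal.ofReal (f x) := by
        rw [ENNReal.rpow_one]
        gcongr
        exact hfκ x

lemma eLpNorm_sqrt_two (f : Ω → ℝ) :
    eLpNorm (fun x => √(f x)) 2 μ = (∫⁻ x, ENNReal.ofReal (f x) ∂μ) ^ (1 / 2 : ℝ) := by
  rw [eLpNorm_eq_lintegral_rpow_enorm_toReal two_ne_zero ENNReal.ofNat_ne_top,
    ENNReal.toReal_ofNat]
  congr 2 with x
  rw [Real.enorm_eq_ofReal (Real.sqrt_nonneg _),
    ENNReal.ofReal_rpow_of_nonneg (Real.sqrt_nonneg _) two_pos.le, Real.rpow_two,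
    Real.sq_sqrt']
  simp

end MeasureSpace

section NormedGroup

variable {E : Type*} [NormedAddCommGroup E]

lemma sqrt_le_indicator_ball_add_mul {g κ : ℝ} (hgκ : g ≤ κ) (x : E) :
    √g ≤ (ball (0 : E) 1).indicator (fun _ => √κ) x +
      √(‖x‖ ^ 2 * g) * (ball (0 : E) 1)ᶜ.indicator (fun y => ‖y‖⁻¹) x := by
  by_cases hx : x ∈ ball (0 : E) 1
  · rw [indicator_of_mem hx, indicator_of_notMem (notMem_compl_iff.2 hx), mul_zero, add_zero]
    exact Real.sqrt_le_sqrt hgκ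
  · have hx₀ : 0 < ‖x‖ := by
      simp only [mem_ball_zero_iff, not_lt] at hx; linarith
    rw [indicator_of_notMem hx, indicator_of_mem (mem_compl hx), zero_add,
      Real.sqrt_mul (by positivity), Real.sqrt_sq hx₀.le, mul_comm ‖x‖, mul_assoc,
      mul_inv_cancel₀ hx₀.ne', mul_one]

variable [MeasurableSpace E] [OpensMeasurableSpace E] {μ : Measure E}

lemma eLpNorm_sqrt_le {g : E → ℝ} {κ s : ℝ} (hs₁ : 1 ≤ s) (hs₂ : s < 2)
    (hgκ : ∀ x, g x ≤ κ) (hg : AEStronglyMeasurable (fun x => ‖x‖ ^ 2 * g x) μ) :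
    eLpNorm (fun x => √(g x)) (ENNReal.ofReal s) μ ≤
      eLpNorm ((ball (0 : E) 1).indicator fun _ => √κ) (ENNReal.ofReal s) μ +
        (∫⁻ x, ENNReal.ofReal (‖x‖ ^ 2 * g x) ∂μ) ^ (1 / 2 : ℝ) *
          eLpNorm ((ball (0 : E) 1)ᶜ.indicator fun y => ‖y‖⁻¹)
            (ENNReal.ofReal (2 * s / (2 - s))) μ := by
  have : ENNReal.HolderTriple 2 (ENNReal.ofReal (2 * s / (2 - s))) (ENNReal.ofReal s) := by
    have h : Real.HolderTriple 2 (2 * s / (2 - s)) s :=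
      ⟨by field_simp; ring, two_pos, div_pos (by linarith) (by linarith)⟩
    simpa using h.ennrealOfReal
  have hB : AEStronglyMeasurable ((ball (0 : E) 1).indicator fun _ => √κ) μ :=
    aestronglyMeasurable_const.indicator measurableSet_ball
  have hh : AEStronglyMeasurable ((ball (0 : E) 1)ᶜ.indicator fun y => ‖y‖⁻¹) μ :=
    measurable_norm.inv.aestronglyMeasurable.indicator measurableSet_ball.compl
  have hφ : AEStronglyMeasurable (fun x => √(‖x‖ ^ 2 * g x)) μ :=
    Real.continuous_sqrt.comp_aestronglyMeasurable hg
  calc eLpNorm (fun x => √(g x)) (ENNReal.ofReal s) μ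
      ≤ eLpNorm (((ball (0 : E) 1).indicator fun _ => √κ) +
          (fun x => √(‖x‖ ^ 2 * g x)) • ((ball (0 : E) 1)ᶜ.indicator fun y => ‖y‖⁻¹))
          (ENNReal.ofReal s) μ := by
        refine eLpNorm_mono_real fun x => ?_
        rw [Real.norm_of_nonneg (Real.sqrt_nonneg _)]
        exact sqrt_le_indicator_ball_add_mul (hgκ x) x
    _ ≤ eLpNorm ((ball (0 : E) 1).indicator fun _ => √κ) (ENNReal.ofReal s) μ +
          eLpNorm ((fun x => √(‖x‖ ^ 2 * g x)) • ((ball (0 : E) 1)ᶜ.indicator fun y => ‖y‖⁻¹))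
          (ENNReal.ofReal s) μ :=
        eLpNorm_add_le hB (hφ.smul hh) (by simpa using hs₁)
    _ ≤ _ := by
        gcongr
        rw [← eLpNorm_sqrt_two]
        exact eLpNorm_smul_le_mul_eLpNorm hh hφ

end NormedGroup

section FiniteDimensional

variable {E : Type*} [NormedAddCommGroup E] [NormedSpace ℝ E] [FiniteDimensional ℝ E]
  [MeasurableSpace E] [BorelSpace E] {μ : Measure E} [μ.IsAddHaarMeasure]

lemma memLp_one_add_norm_inv {r : ℝ} (hr : finrank ℝ E < r) :
    MemLp (fun x : E => (1 + ‖x‖)⁻¹) (ENNReal.ofReal r) μ := by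
  have hr₀ : 0 < r := lt_of_le_of_lt (Nat.cast_nonneg _) hr
  rw [← integrable_norm_rpow_iff (by fun_prop) (by simpa using hr₀) ENNReal.ofReal_ne_top,
    ENNReal.toReal_ofReal hr₀.le]
  refine (integrable_one_add_norm hr).congr (.of_forall fun x => ?_)
  dsimp only
  rw [Real.norm_of_nonneg (by positivity), Real.inv_rpow (by positivity),
    Real.rpow_neg (by positivity)]

lemma memLp_indicator_compl_ball_norm_inv {r : ℝ} (hr : finrank ℝ E < r) :
    MemLp ((ball (0 : E) 1)ᶜ.indicator fun x => ‖x‖⁻¹) (ENNReal.ofReal r) μ := by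
  refine ((memLp_one_add_norm_inv hr).const_mul 2).of_le
    (measurable_norm.inv.aestronglyMeasurable.indicator measurableSet_ball.compl)
    (.of_forall fun x => ?_)
  by_cases hx : x ∈ ball (0 : E) 1
  · simp [indicator_of_notMem (notMem_compl_iff.2 hx)]
  · have hx₁ : 1 ≤ ‖x‖ := by simpa using hx
    rw [indicator_of_mem (mem_compl hx), Real.norm_of_nonneg (by positivity),
      Real.norm_of_nonneg (by positivity), ← div_eq_mul_inv,
      inv_le_comm₀ (by positivity) (by positivity), inv_div, div_le_iff₀ two_pos]
    linarith

end FiniteDimensional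

theorem stmt_7 (s : ℝ) (hs : s ∈ Set.Ioo (6 / 5 : ℝ) 2) (κ C : ℝ) :
    ∃ C' : ℝ, ∀ γ α : E3 → ℝ,
      (∀ p, 0 ≤ γ p) → (∀ p, γ p ≤ κ) →
      (∫ p, γ p) ≤ C → (∫ p, ‖p‖ ^ 2 * γ p) ≤ C →
      Integrable γ (volume : Measure E3) →
      Integrable (fun p => ‖p‖ ^ 2 * γ p) (volume : Measure E3) →
      (∀ p, (α p) ^ 2 ≤ (γ p) ^ 2 + γ p) →
      eLpNorm α (ENNReal.ofReal s) (volume : Measure E3) ≤ ENNReal.ofReal C' := by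
  obtain ⟨hs₁, hs₂⟩ := hs
  have hr : (finrank ℝ E3 : ℝ) < 2 * s / (2 - s) := by
    rw [finrank_euclideanSpace_fin, lt_div_iff₀ (by linarith)]
    push_cast
    linarith
  set K : ℝ≥0∞ := (ENNReal.ofReal κ ^ (s - 1) * ENNReal.ofReal C) ^ (1 / s) +
    (eLpNorm ((ball (0 : E3) 1).indicator fun _ => √κ) (ENNReal.ofReal s) volume +
      ENNReal.ofReal C ^ (1 / 2 : ℝ) * eLpNorm ((ball (0 : E3) 1)ᶜ.indicator fun p => ‖p‖⁻¹)
        (ENNReal.ofReal (2 * s / (2 - s))) volume)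
  have hK : K ≠ ∞ := by
    have hB := (memLp_indicator_const (ENNReal.ofReal s) (measurableSet_ball (x := 0) (ε := 1))
      (√κ) (.inr measure_ball_lt_top.ne) (μ := (volume : Measure E3))).eLpNorm_ne_top
    have hh := (memLp_indicator_compl_ball_norm_inv hr (μ := (volume : Measure E3))).eLpNorm_ne_top
    have hκ : ENNReal.ofReal κ ^ (s - 1) ≠ ∞ :=
      ENNReal.rpow_ne_top_of_nonneg (by linarith) ENNReal.ofReal_ne_top
    finiteness
  refine ⟨K.toReal, fun γ α hγ₀ hγκ hγC hγ₂C hγ hγ₂ hα => ?_⟩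
  rw [ENNReal.ofReal_toReal hK]
  calc eLpNorm α (ENNReal.ofReal s) volume
      ≤ eLpNorm (γ + fun p => √(γ p)) (ENNReal.ofReal s) volume :=
        eLpNorm_mono_real fun p => abs_le_add_sqrt_of_sq_le_sq_add (hγ₀ p) (hα p)
    _ ≤ eLpNorm γ (ENNReal.ofReal s) volume +
          eLpNorm (fun p => √(γ p)) (ENNReal.ofReal s) volume :=
        eLpNorm_add_le hγ.1 (Real.continuous_sqrt.comp_aestronglyMeasurable hγ.1)
          (ENNReal.one_le_ofReal.2 (by linarith))
    _ ≤ K := by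
        refine add_le_add ?_ ?_
        · refine (eLpNorm_le_rpow_mul_lintegral_of_le (by linarith) hγ₀ hγκ).trans ?_
          gcongr
          exact lintegral_ofReal_le_of_integral_le hγ hγ₀ hγC
        · refine (eLpNorm_sqrt_le (by linarith) hs₂ hγκ hγ₂.1).trans ?_
          gcongr
          exact lintegral_ofReal_le_of_integral_le hγ₂ (fun p => by positivity [hγ₀ p]) hγ₂C
end

section
/- Let F be the Bogoliubov energy functional and (γ, α, ρ₀) a state in D with ρ = ρ₀ + ρ_γ. For η ∈ (0,1) set γ̄ := ηγ, ᾱ := ηα, ρ̄₀ := ρ₀ + (1−η)ρ_γ. Then (γ̄, ᾱ, ρ̄₀) ∈ D, the total density is unchanged (ρ̄₀ + ∫γ̄ = ρ), and F(γ̄, ᾱ, ρ̄₀) − F(γ, α, ρ₀) = (η−1)∫p²γ + (η²−1)(1/2)∬V̂(p−q)(γ(p)γ(q)+α(p)α(q))dpdq + ([ρ₀+(1−η)ρ_γ]η − ρ₀)∫V̂(p)(γ(p)+α(p))dp. -/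
open MeasureTheory

/-- The variational domain `D`. -/
def bogDom (x : (E3 → ℝ) × (E3 → ℝ) × ℝ) : Prop :=
  Integrable x.1 (volume : Measure E3) ∧
    Integrable (fun p => ‖p‖ ^ 2 * x.1 p) (volume : Measure E3) ∧
    (∀ p, 0 ≤ x.1 p) ∧ (∀ p, (x.2.1 p) ^ 2 ≤ (x.1 p) ^ 2 + x.1 p) ∧ 0 ≤ x.2.2

theorem stmt_15 (Vhat : E3 → ℝ) (μ : ℝ) (γ α : E3 → ℝ) (ρ₀ η : ℝ)
    (hη : η ∈ Set.Ioo (0 : ℝ) 1) (hD : bogDom (γ, α, ρ₀)) :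
    bogDom (fun p => η * γ p, fun p => η * α p, ρ₀ + (1 - η) * ∫ p, γ p) ∧
    (ρ₀ + (1 - η) * ∫ p, γ p) + (∫ p, η * γ p) = ρ₀ + ∫ p, γ p ∧
    bogF Vhat μ (fun p => η * γ p) (fun p => η * α p) (ρ₀ + (1 - η) * ∫ p, γ p) -
        bogF Vhat μ γ α ρ₀ =
      (η - 1) * (∫ p, ‖p‖ ^ 2 * γ p) +
        (η ^ 2 - 1) * (1 / 2 * ∫ p, ∫ q, Vhat (p - q) * (γ p * γ q + α p * α q)) +
        ((ρ₀ + (1 - η) * ∫ p, γ p) * η - ρ₀) * ∫ p, Vhat p * (γ p + α p) := by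
  obtain ⟨hγint, hpint, hγ0, hα, hρ0⟩ := hD
  obtain ⟨hη0, hη1⟩ := hη
  dsimp only at hγint hpint hγ0 hα hρ0
  have h1 : (∫ p, η * γ p) = η * ∫ p, γ p := integral_const_mul η γ
  have h2 : (∫ p : E3, ‖p‖ ^ 2 * (η * γ p)) = η * ∫ p : E3, ‖p‖ ^ 2 * γ p := by
    simp_rw [mul_left_comm _ η, integral_const_mul]
  have h3 : (∫ p, Vhat p * (η * γ p + η * α p)) = η * ∫ p, Vhat p * (γ p + α p) := by
    have : ∀ p, Vhat p * (η * γ p + η * α p) = η * (Vhat p * (γ p + α p)) := by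
      intro p; ring
    simp_rw [this, integral_const_mul]
  have h4 : (∫ p : E3, ∫ q : E3, Vhat (p - q) * (η * γ p * (η * γ q) + η * α p * (η * α q)))
      = η ^ 2 * ∫ p : E3, ∫ q : E3, Vhat (p - q) * (γ p * γ q + α p * α q) := by
    have : ∀ p q : E3, Vhat (p - q) * (η * γ p * (η * γ q) + η * α p * (η * α q))
        = η ^ 2 * (Vhat (p - q) * (γ p * γ q + α p * α q)) := by
      intro p q; ring
    simp_rw [this, integral_const_mul]
  have hRnn : 0 ≤ ∫ p, γ p := integral_nonneg hγ0
  refine ⟨⟨hγint.const_mul η, ?_, fun p => mul_nonneg hη0.le (hγ0 p), fun p => ?_, ?_⟩,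
      by rw [h1]; ring, ?_⟩
  · have := hpint.const_mul η
    apply this.congr
    filter_upwards with p; ring
  · show (η * α p) ^ 2 ≤ (η * γ p) ^ 2 + η * γ p
    have := hα p
    nlinarith [mul_le_mul_of_nonneg_left this (sq_nonneg η),
      mul_nonneg (mul_nonneg hη0.le (by linarith : (0:ℝ) ≤ 1 - η)) (hγ0 p)]
  · show (0:ℝ) ≤ ρ₀ + (1 - η) * ∫ p, γ p
    have : (0:ℝ) ≤ (1 - η) * ∫ p, γ p := mul_nonneg (by linarith) hRnn
    linarith [hρ0]
  · simp only [bogF, h1, h2, h3, h4]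
    ring
end
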